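/- Let n ≥ 1 and let f : ℝⁿ → ℝ be differentiable at the all-ones vector 𝟙 = (1,…,1). Define f^Sym on the positive orthant by f^Sym(σ) = (1/2)·f(σ) + (1/2)·(∏ᵢ σᵢ)·f(1/σ₁, …, 1/σₙ). Then f^Sym is differentiable at 𝟙 and every partial derivative of f^Sym at 𝟙 equals (1/2)·f(𝟙); that is, ∂f^Sym/∂σᵢ(1,…,1) = (1/2)·f(1,…,1) for every i. -/

import Mathlib

/-!
At `𝟙` the coordinatewise inversion has derivative `-id` and fixes `𝟙`, so the two terms of the
derivative of `f^Sym` involving `Df(𝟙)` cancel. What survives is `f(𝟙) / 2` times the derivative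
of `σ ↦ ∏ σᵢ` at `𝟙`, which is the sum of the coordinates.
-/

open ContinuousLinearMap

variable {𝕜 : Type*} [NontriviallyNormedField 𝕜] {ι : Type*} [Fintype ι]

noncomputable def symmetrization (f : (ι → 𝕜) → 𝕜) (σ : ι → 𝕜) : 𝕜 :=
  (1/2) * f σ + (1/2) * (∏ i, σ i) * f (fun i => (σ i)⁻¹)

theorem hasFDerivAt_pi_inv_one :
    HasFDerivAt (fun σ : ι → 𝕜 => fun i => (σ i)⁻¹) (-ContinuousLinearMap.id 𝕜 (ι → 𝕜)) 1 := by
  refine hasFDerivAt_pi'.2 fun i => ?_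
  refine ((hasDerivAt_inv (one_ne_zero (α := 𝕜))).comp_hasFDerivAt (1 : ι → 𝕜)
    (hasFDerivAt_apply (𝕜 := 𝕜) i 1)).congr_fderiv ?_
  ext v
  simp

theorem hasFDerivAt_prod_one :
    HasFDerivAt (fun σ : ι → 𝕜 => ∏ i, σ i) (∑ i, proj (R := 𝕜) (φ := fun _ : ι => 𝕜) i) 1 := by
  classical
  simpa only [Pi.one_apply, Finset.prod_const_one, one_smul] using
    hasFDerivAt_finsetProd (𝕜 := 𝕜) (u := Finset.univ) (x := (1 : ι → 𝕜))

theorem hasFDerivAt_symmetrization_one {f : (ι → 𝕜) → 𝕜} (hf : DifferentiableAt 𝕜 f 1) :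
    HasFDerivAt (symmetrization f)
      ((f 1 / 2) • ∑ i, proj (R := 𝕜) (φ := fun _ : ι => 𝕜) i) 1 := by
  have hf_inv : HasFDerivAt (fun σ : ι → 𝕜 => f fun i => (σ i)⁻¹)
      ((fderiv 𝕜 f 1).comp (-ContinuousLinearMap.id 𝕜 (ι → 𝕜))) 1 := by
    have hf_at_inv : HasFDerivAt f (fderiv 𝕜 f 1) (fun i => ((1 : ι → 𝕜) i)⁻¹) := by
      rw [show (fun i => ((1 : ι → 𝕜) i)⁻¹) = 1 from funext fun _ => inv_one]
      exact hf.hasFDerivAt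
    exact hf_at_inv.comp 1 hasFDerivAt_pi_inv_one
  refine ((hf.hasFDerivAt.const_mul (1/2)).add
    ((hasFDerivAt_prod_one.const_mul (1/2)).mul hf_inv)).congr_fderiv ?_
  ext v
  simp only [one_div, Pi.one_apply, Finset.prod_const_one, mul_one, comp_neg, comp_id, smul_neg,
    inv_one, ← Pi.one_def, add_neg_cancel_left, smul_apply, sum_apply, proj_apply, smul_eq_mul]
  ring

theorem statement_4 (n : ℕ) (f : (Fin n → ℝ) → ℝ)
    (hf : DifferentiableAt ℝ f (fun _ => 1))
    (fSym : (Fin n → ℝ) → ℝ)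
    (hfSym : ∀ σ : Fin n → ℝ, fSym σ =
      (1/2) * f σ + (1/2) * (∏ i, σ i) * f (fun i => (σ i)⁻¹)) :
    DifferentiableAt ℝ fSym (fun _ => 1) ∧
    ∀ i : Fin n, fderiv ℝ fSym (fun _ => 1) (Pi.single i 1) =
      (1/2) * f (fun _ => 1) := by
  have hderiv : HasFDerivAt fSym _ 1 :=
    (funext hfSym : fSym = symmetrization f) ▸ hasFDerivAt_symmetrization_one hf
  refine ⟨hderiv.differentiableAt, fun i => ?_⟩
  rw [show (fun _ : Fin n => (1 : ℝ)) = 1 from rfl, hderiv.fderiv]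
  simp only [smul_apply, sum_apply, proj_apply, Finset.sum_pi_single', Finset.mem_univ,
    if_true, smul_eq_mul, mul_one]
  ring
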